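/- Let G be a countable group with sofic approximation Σ = (σ_n : G → Sym(V_n)), (𝒳,d) a compact metric space, μ a shift-invariant Borel probability measure on 𝒳^G, and suppose θ ∈ Pr(Pr(𝒳^G)) is a subsequential weak* limit of the distributions P^{σ_n}_* μ_n, where μ_n ∈ Pr(𝒳^{V_n}) and the local weak* convergence μ_n → μ holds (i.e. for every weak* neighbourhood O of μ, the proportion of v ∈ V_n with (Π^{σ_n}_v)_* μ_n ∈ O tends to 1). Then θ is supported on the set of shift-invariant measures on 𝒳^G, and its barycentre equals μ: ∫ ν dθ(ν) = μ. -/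

import Mathlib

/-!
Pairing with a test function `f`, `∫ (∫ f dν) dQ_n(ν)` is the average over `v` of
`∫ f d(Π_v)_* μ_n`, and local weak* convergence makes most of these averaged terms close to
`∫ f dμ`; passing to the limit along the subsequence gives the barycentre.

For invariance, soficity makes `Π_{σ^g v} x` and `S^g (Π_v x)` agree on any finite window for
most `v`, so every empirical distribution is almost `S^g`-invariant against a uniformly
continuous test function, uniformly in `x`. Hence the open set of measures whose defect exceeds a
fixed `δ > 0` is eventually not charged by `Q_n`, so it is `θ`-null by the portmanteau theorem;
second countability of the space of measures then makes the non-invariant measures `θ`-null.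
-/

open MeasureTheory Filter Topology
open scoped ENNReal NNReal

/-- The right-shift action: `(S^g y) h = y (h * g)`. -/
def shiftMap (G : Type*) [Group G] (𝒳 : Type*) (g : G) : (G → 𝒳) → (G → 𝒳) :=
  fun y h => y (h * g)

/-- The pullback name of `x : 𝒳^V` at `v` over `σ`. -/
def pullbackName {G W 𝒳 : Type*} (σ : G → Equiv.Perm W) (v : W) (x : W → 𝒳) : G → 𝒳 :=
  fun g => x (σ g v)

lemma measurable_pullbackName {G W 𝒳 : Type*} [MeasurableSpace 𝒳]
    (σ : G → Equiv.Perm W) (v : W) : Measurable (pullbackName (𝒳 := 𝒳) σ v) :=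
  measurable_pi_lambda _ fun _ => measurable_pi_apply _

/-- The pushforward `(Π^σ_v)_* θ` of a probability measure on `𝒳^W` to `𝒳^G`. -/
noncomputable def pushName {G W 𝒳 : Type*} [MeasurableSpace 𝒳]
    (σ : G → Equiv.Perm W) (v : W) (θ : ProbabilityMeasure (W → 𝒳)) :
    ProbabilityMeasure (G → 𝒳) :=
  θ.map (measurable_pullbackName σ v).aemeasurable

/-- The empirical distribution `P^σ_x = (1/|W|) Σ_v δ_{Π^σ_v(x)}` as a probability
measure on `𝒳^G`. -/
noncomputable def empProb {G W 𝒳 : Type*} [Fintype W] [Nonempty W] [MeasurableSpace 𝒳]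
    (σ : G → Equiv.Perm W) (x : W → 𝒳) : ProbabilityMeasure (G → 𝒳) :=
  ⟨(Fintype.card W : ℝ≥0∞)⁻¹ • ∑ v : W, Measure.dirac (pullbackName σ v x), by
    constructor
    simp only [Measure.smul_apply, Measure.finset_sum_apply, measure_univ,
      Finset.sum_const, Finset.card_univ, nsmul_eq_mul, mul_one, smul_eq_mul]
    exact ENNReal.inv_mul_cancel (by simp [Fintype.card_ne_zero]) (by simp)⟩

open BoundedContinuousFunction
open scoped BigOperators

noncomputable def proportion {W : Type*} (p : W → Prop) : ℝ :=
  (Nat.card {v // p v} : ℝ) / Nat.card W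

section Proportion

variable {W : Type*} [Fintype W]

lemma one_sub_proportion_eq_expect [Nonempty W] (p : W → Prop) [DecidablePred p] :
    1 - proportion p = 𝔼 v, if p v then (0 : ℝ) else 1 := by
  have hW : (Fintype.card W : ℝ) ≠ 0 := by positivity
  have hcard := Finset.card_filter_add_card_filter_not (s := Finset.univ) (p := p)
  rw [proportion, Fintype.expect_eq_sum_div_card, Nat.card_eq_fintype_card,
    Nat.card_eq_fintype_card, Fintype.card_subtype, Finset.sum_ite, Finset.sum_const_zero,
    Finset.sum_const, nsmul_one, zero_add, eq_div_iff hW, sub_mul, div_mul_cancel₀ _ hW,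
    one_mul, Finset.card_univ] at *
  rw [← hcard]
  push_cast
  ring

lemma abs_expect_sub_le [Nonempty W] {u : W → ℝ} {a ε c : ℝ} (hε : 0 ≤ ε) (p : W → Prop)
    (hgood : ∀ v, p v → |u v - a| ≤ ε) (hall : ∀ v, |u v - a| ≤ c) :
    |𝔼 v, u v - a| ≤ ε + c * (1 - proportion p) := by
  classical
  calc |𝔼 v, u v - a| = |𝔼 v, (u v - a)| := by
        rw [Finset.expect_sub_distrib, Fintype.expect_const]
    _ ≤ 𝔼 v, |u v - a| := Finset.abs_expect_le _ _
    _ ≤ 𝔼 v, (ε + c * if p v then 0 else 1) := by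
        refine Finset.expect_le_expect fun v _ => ?_
        by_cases hv : p v
        · simpa [hv] using hgood v hv
        · simpa [hv] using (hall v).trans (le_add_of_nonneg_left hε)
    _ = ε + c * (1 - proportion p) := by
        rw [Finset.expect_add_distrib, Fintype.expect_const, ← Finset.mul_expect,
          one_sub_proportion_eq_expect]

end Proportion

lemma eventually_mul_one_sub_lt {ι : Type*} {l : Filter ι} {f : ι → ℝ}
    (hf : Tendsto f l (𝓝 1)) (c : ℝ) {ε : ℝ} (hε : 0 < ε) :
    ∀ᶠ i in l, c * (1 - f i) < ε := by
  have h : Tendsto (fun i => c * (1 - f i)) l (𝓝 (c * (1 - 1))) :=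
    (hf.const_sub 1).const_mul c
  rw [sub_self, mul_zero] at h
  exact h.eventually (gt_mem_nhds hε)

section ProportionLimits

variable {ι : Type*} {l : Filter ι} {V : ι → Type*} [∀ i, Fintype (V i)] [∀ i, Nonempty (V i)]

lemma tendsto_proportion_forall_mem {κ : Type*} (I : Finset κ) {p : ∀ i, κ → V i → Prop}
    (hp : ∀ k ∈ I, Tendsto (fun i => proportion (p i k)) l (𝓝 1)) :
    Tendsto (fun i => proportion fun v => ∀ k ∈ I, p i k v) l (𝓝 1) := by
  classical
  suffices h : Tendsto (fun i => 1 - proportion fun v => ∀ k ∈ I, p i k v) l (𝓝 0) by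
    simpa using h.const_sub 1
  have hsum : Tendsto (fun i => ∑ k ∈ I, (1 - proportion (p i k))) l (𝓝 0) := by
    simpa using tendsto_finsetSum I fun k hk => (hp k hk).const_sub 1
  refine squeeze_zero (fun i => ?_) (fun i => ?_) hsum
  · rw [one_sub_proportion_eq_expect]
    exact Finset.expect_nonneg fun v _ => by split_ifs <;> norm_num
  · simp only [one_sub_proportion_eq_expect, ← Finset.expect_sum_comm]
    refine Finset.expect_le_expect fun v _ => ?_
    split_ifs with hv
    · exact Finset.sum_nonneg fun k _ => by split_ifs <;> norm_num
    · push Not at hv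
      obtain ⟨k, hk, hpk⟩ := hv
      calc (1 : ℝ) = if p i k v then 0 else 1 := by simp [hpk]
        _ ≤ ∑ k ∈ I, if p i k v then (0 : ℝ) else 1 :=
          Finset.single_le_sum (f := fun k => if p i k v then (0 : ℝ) else 1)
            (fun k _ => by split_ifs <;> norm_num) hk

lemma tendsto_expect_of_tendsto_proportion {u : ∀ i, V i → ℝ} {a c : ℝ}
    (hbdd : ∀ i v, |u i v - a| ≤ c)
    (hu : ∀ O ∈ 𝓝 a, Tendsto (fun i => proportion fun v => u i v ∈ O) l (𝓝 1)) :
    Tendsto (fun i => 𝔼 v, u i v) l (𝓝 a) := by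
  refine Metric.tendsto_nhds.2 fun ε hε => ?_
  filter_upwards [eventually_mul_one_sub_lt (hu _ (Metric.ball_mem_nhds a
    (half_pos hε))) c (half_pos hε)] with i hi
  have h := abs_expect_sub_le (half_pos hε).le (fun v => u i v ∈ Metric.ball a (ε / 2))
    (fun v hv => by rw [Metric.mem_ball, Real.dist_eq] at hv; exact hv.le) (hbdd i)
  rw [Real.dist_eq]
  linarith

end ProportionLimits

lemma UniformContinuous.exists_finset_eqOn_dist_lt {ι α β : Type*} [UniformSpace α]
    [PseudoMetricSpace β] {f : (ι → α) → β} (hf : UniformContinuous f) {ε : ℝ} (hε : 0 < ε) :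
    ∃ I : Finset ι, ∀ y z, Set.EqOn y z I → dist (f y) (f z) < ε := by
  have hU : (fun p : (ι → α) × (ι → α) => (f p.1, f p.2)) ⁻¹' {p | dist p.1 p.2 < ε} ∈
      uniformity (ι → α) := hf (Metric.dist_mem_uniformity hε)
  rw [Pi.uniformity, Filter.mem_iInf] at hU
  obtain ⟨I, hI, U, hU, hUeq⟩ := hU
  refine ⟨hI.toFinset, fun y z hyz => ?_⟩
  have hmem : (y, z) ∈ ⋂ i, U i := Set.mem_iInter.2 fun i => by
    obtain ⟨W, hW, hWU⟩ := Filter.mem_comap.1 (hU i)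
    exact hWU (by simpa [hyz (hI.mem_toFinset.2 i.2)] using refl_mem_uniformity hW)
  rw [← hUeq] at hmem
  exact hmem

lemma integral_empProb {G 𝒳 W : Type*} [MeasurableSpace 𝒳] [Fintype W] [Nonempty W]
    (σ : G → Equiv.Perm W) (x : W → 𝒳) {f : (G → 𝒳) → ℝ} (hf : StronglyMeasurable f) :
    ∫ y, f y ∂(empProb σ x : Measure (G → 𝒳)) = 𝔼 v, f (pullbackName σ v x) := by
  change ∫ y, f y ∂((Fintype.card W : ℝ≥0∞)⁻¹ • ∑ v, Measure.dirac (pullbackName σ v x)) = _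
  rw [integral_smul_measure, integral_finsetSum_measure fun v _ => ?_,
    Fintype.expect_eq_sum_div_card]
  · simp [integral_dirac' _ _ hf, ENNReal.toReal_inv, div_eq_inv_mul]
  · exact integrable_dirac' hf enorm_lt_top

lemma continuous_shiftMap {G 𝒳 : Type*} [Group G] [TopologicalSpace 𝒳] (g : G) :
    Continuous (shiftMap G 𝒳 g) :=
  continuous_pi fun h => continuous_apply (h * g)

lemma MeasureTheory.Measure.map_eq_self_of_forall_integral_comp_eq {Ω : Type*}
    [TopologicalSpace Ω] [MeasurableSpace Ω] [HasOuterApproxClosed Ω] [BorelSpace Ω]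
    {ν : Measure Ω} [IsFiniteMeasure ν] {T : Ω → Ω} (hT : Continuous T)
    (h : ∀ f : Ω →ᵇ ℝ, ∫ x, f (T x) ∂ν = ∫ x, f x ∂ν) : ν.map T = ν :=
  ext_of_forall_integral_eq_of_IsFiniteMeasure fun f => by
    rw [integral_map hT.aemeasurable f.continuous.aestronglyMeasurable, h]

section ShiftDefect

variable {G 𝒳 : Type*} [Group G] [MeasurableSpace 𝒳]

noncomputable def shiftDefect [TopologicalSpace 𝒳] (g : G) (f : (G → 𝒳) →ᵇ ℝ)
    (ν : ProbabilityMeasure (G → 𝒳)) : ℝ :=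
  |∫ y, f (shiftMap G 𝒳 g y) ∂(ν : Measure (G → 𝒳)) - ∫ y, f y ∂(ν : Measure (G → 𝒳))|

lemma continuous_shiftDefect [TopologicalSpace 𝒳] [OpensMeasurableSpace (G → 𝒳)] (g : G)
    (f : (G → 𝒳) →ᵇ ℝ) : Continuous (shiftDefect g f) :=
  continuous_abs.comp <|
    (ProbabilityMeasure.continuous_integral_boundedContinuousFunction
      (f.compContinuous ⟨_, continuous_shiftMap g⟩)).sub
    (ProbabilityMeasure.continuous_integral_boundedContinuousFunction f)

lemma map_shiftMap_eq_of_forall_shiftDefect_eq_zero [TopologicalSpace 𝒳]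
    [HasOuterApproxClosed (G → 𝒳)] [BorelSpace (G → 𝒳)] {g : G} {ν : ProbabilityMeasure (G → 𝒳)}
    (h : ∀ f, shiftDefect g f ν = 0) :
    (ν : Measure (G → 𝒳)).map (shiftMap G 𝒳 g) = ν :=
  Measure.map_eq_self_of_forall_integral_comp_eq (continuous_shiftMap g) fun f =>
    sub_eq_zero.1 (abs_eq_zero.1 (h f))

lemma eventually_shiftDefect_empProb_lt [UniformSpace 𝒳] [OpensMeasurableSpace (G → 𝒳)] {ι : Type*}
    {l : Filter ι} {V : ι → Type*} [∀ i, Fintype (V i)] [∀ i, Nonempty (V i)]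
    (σ : ∀ i, G → Equiv.Perm (V i)) {g : G}
    (hσ : ∀ h, Tendsto (fun i => proportion fun v => σ i h (σ i g v) = σ i (h * g) v) l (𝓝 1))
    {f : (G → 𝒳) →ᵇ ℝ} (hf : UniformContinuous f) {ε : ℝ} (hε : 0 < ε) :
    ∀ᶠ i in l, ∀ x : V i → 𝒳, shiftDefect g f (empProb (σ i) x) < ε := by
  obtain ⟨I, hI⟩ := hf.exists_finset_eqOn_dist_lt (half_pos hε)
  -- For most `v`, `S^g (Π_v x)` and `Π_{σ g v} x` agree on the window `I`.
  filter_upwards [eventually_mul_one_sub_lt (tendsto_proportion_forall_mem I fun h _ => hσ h)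
    (2 * ‖f‖) (half_pos hε)] with i hi x
  have hshift : 𝔼 v, f (pullbackName (σ i) v x) = 𝔼 v, f (pullbackName (σ i) (σ i g v) x) :=
    (Fintype.expect_equiv (σ i g) _ _ fun _ => rfl).symm
  rw [shiftDefect, integral_empProb (f := fun y => f (shiftMap G 𝒳 g y)) _ _
    (f.continuous.comp (continuous_shiftMap g)).stronglyMeasurable,
    integral_empProb _ _ f.continuous.stronglyMeasurable, hshift, ← Finset.expect_sub_distrib,
    ← sub_zero (𝔼 v, _)]
  refine (abs_expect_sub_le (c := 2 * ‖f‖) (half_pos hε).le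
    (fun v => ∀ k ∈ I, σ i k (σ i g v) = σ i (k * g) v) (fun v hv => ?_) fun v => ?_).trans_lt
    (by linarith)
  · rw [sub_zero, ← Real.dist_eq]
    refine (hI _ _ fun h hh => ?_).le
    simp only [shiftMap, pullbackName, hv h hh]
  · rw [sub_zero, ← Real.dist_eq]
    exact f.dist_le_two_norm _ _

end ShiftDefect

/-- A point where some `D k` is positive has the open neighbourhood `{D k > D k x / 2}`, which
the `Q i` eventually do not charge; the portmanteau theorem makes it `θ`-null, and second
countability turns these local statements into a global one. -/
lemma ProbabilityMeasure.measure_exists_pos_eq_zero_of_tendsto {X ι κ : Type*}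
    [TopologicalSpace X] [SecondCountableTopology X] [MeasurableSpace X] [OpensMeasurableSpace X]
    [HasOuterApproxClosed X] {l : Filter ι} [l.NeBot] {Q : ι → ProbabilityMeasure X}
    {θ : ProbabilityMeasure X} (hlim : Tendsto Q l (𝓝 θ)) {D : κ → X → ℝ}
    (hD : ∀ k, Continuous (D k))
    (hsmall : ∀ k, ∀ δ > 0, ∀ᶠ i in l, (Q i : Measure X) {x | δ < D k x} = 0) :
    (θ : Measure X) {x | ∃ k, 0 < D k x} = 0 := by
  refine measure_null_of_locally_null _ fun x ⟨k, hk⟩ => ⟨{y | D k x / 2 < D k y}, ?_, ?_⟩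
  · exact mem_nhdsWithin_of_mem_nhds
      ((isOpen_lt continuous_const (hD k)).mem_nhds (half_lt_self hk))
  · refine nonpos_iff_eq_zero.1 ?_
    calc (θ : Measure X) {y | D k x / 2 < D k y}
        ≤ l.liminf fun i => (Q i : Measure X) {y | D k x / 2 < D k y} :=
          ProbabilityMeasure.le_liminf_measure_open_of_tendsto hlim
            (isOpen_lt continuous_const (hD k))
      _ = 0 := by rw [liminf_congr (hsmall k _ (half_pos hk)), liminf_const]

lemma integral_integral_empProb {G 𝒳 W : Type*} [TopologicalSpace 𝒳] [MeasurableSpace 𝒳]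
    [OpensMeasurableSpace (G → 𝒳)] [Fintype W] [Nonempty W] (σ : G → Equiv.Perm W)
    (m : ProbabilityMeasure (W → 𝒳)) (f : (G → 𝒳) →ᵇ ℝ) :
    ∫ x, (∫ y, f y ∂(empProb σ x : Measure (G → 𝒳))) ∂(m : Measure (W → 𝒳))
      = 𝔼 v, ∫ y, f y ∂(pushName σ v m : Measure (G → 𝒳)) := by
  have hpush : ∀ v, (pushName σ v m : Measure (G → 𝒳))
      = (m : Measure (W → 𝒳)).map (pullbackName σ v) := fun v =>
    ProbabilityMeasure.toMeasure_map _ _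
  have hemp : ∀ x, ∫ y, f y ∂(empProb σ x : Measure (G → 𝒳)) = 𝔼 v, f (pullbackName σ v x) :=
    fun x => integral_empProb σ x f.continuous.stronglyMeasurable
  simp only [hemp, Fintype.expect_eq_sum_div_card, integral_div, hpush]
  rw [integral_finsetSum _ fun v _ => ?_]
  · simp only [integral_map (measurable_pullbackName σ _).aemeasurable
      f.continuous.aestronglyMeasurable]
  · exact (f.integrable _).comp_measurable (measurable_pullbackName σ v)

lemma tendsto_expect_integral_of_tendsto_proportion {Ω ι : Type*} [TopologicalSpace Ω]
    [MeasurableSpace Ω] [OpensMeasurableSpace Ω] {l : Filter ι} {V : ι → Type*}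
    [∀ i, Fintype (V i)] [∀ i, Nonempty (V i)] {ν : ∀ i, V i → ProbabilityMeasure Ω}
    {μ : ProbabilityMeasure Ω}
    (hν : ∀ O ∈ 𝓝 μ, Tendsto (fun i => proportion fun v => ν i v ∈ O) l (𝓝 1))
    (f : Ω →ᵇ ℝ) :
    Tendsto (fun i => 𝔼 v, ∫ y, f y ∂(ν i v : Measure Ω)) l (𝓝 (∫ y, f y ∂(μ : Measure Ω))) := by
  have hcont := ProbabilityMeasure.continuous_integral_boundedContinuousFunction f
  refine tendsto_expect_of_tendsto_proportion
    (u := fun i v => ∫ y, f y ∂(ν i v : Measure Ω)) (c := 2 * ‖f‖) (fun i v => ?_) fun O hO =>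
    hν ((fun ν : ProbabilityMeasure Ω => ∫ y, f y ∂(ν : Measure Ω)) ⁻¹' O)
      (hcont.continuousAt.preimage_mem_nhds hO)
  calc _ ≤ |∫ y, f y ∂(ν i v : Measure Ω)| + |∫ y, f y ∂(μ : Measure Ω)| := abs_sub _ _
    _ ≤ ‖f‖ + ‖f‖ := add_le_add (f.norm_integral_le_norm _) (f.norm_integral_le_norm _)
    _ = 2 * ‖f‖ := by ring

theorem limit_of_empirical_distributions_invariant_barycentre_general
    {G 𝒳 : Type*} [Group G] [Countable G]
    [MetricSpace 𝒳] [CompactSpace 𝒳]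
    [MeasurableSpace 𝒳] [BorelSpace 𝒳]
    [MeasurableSpace (ProbabilityMeasure (G → 𝒳))]
    [OpensMeasurableSpace (ProbabilityMeasure (G → 𝒳))]
    (V : ℕ → Type*) [∀ n, Fintype (V n)] [∀ n, Nonempty (V n)]
    (σ : ∀ n, G → Equiv.Perm (V n))
    (hσ1 : ∀ g h : G,
      Tendsto (fun n => (Nat.card {v : V n // σ n g (σ n h v) = σ n (g * h) v} : ℝ)
          / (Nat.card (V n))) atTop (𝓝 1))
    (μ : ProbabilityMeasure (G → 𝒳))
    (μn : ∀ n, ProbabilityMeasure (V n → 𝒳))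
    (hlw : ∀ O ∈ 𝓝 μ,
      Tendsto (fun n => (Nat.card {v : V n // pushName (σ n) v (μn n) ∈ O} : ℝ)
          / (Nat.card (V n))) atTop (𝓝 1))
    (Q : ∀ n, ProbabilityMeasure (ProbabilityMeasure (G → 𝒳)))
    (hQ : ∀ n, (Q n : Measure (ProbabilityMeasure (G → 𝒳)))
        = Measure.map (fun x => empProb (σ n) x) (μn n : Measure (V n → 𝒳)))
    (θ : ProbabilityMeasure (ProbabilityMeasure (G → 𝒳)))
    (nseq : ℕ → ℕ) (hmono : StrictMono nseq)
    (hlim : Tendsto (fun i => Q (nseq i)) atTop (𝓝 θ)) :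
    (θ : Measure (ProbabilityMeasure (G → 𝒳)))
        {ν : ProbabilityMeasure (G → 𝒳) | ∀ g : G,
          Measure.map (shiftMap G 𝒳 g) (ν : Measure (G → 𝒳)) = (ν : Measure (G → 𝒳))} = 1
      ∧ ∀ f : (G → 𝒳) → ℝ, Continuous f →
          (∫ ν, (∫ x, f x ∂(ν : Measure (G → 𝒳)))
              ∂(θ : Measure (ProbabilityMeasure (G → 𝒳))))
            = ∫ x, f x ∂(μ : Measure (G → 𝒳)) := by
  -- The σ-algebra on `ProbabilityMeasure (G → 𝒳)` is arbitrary, so measurability of `empProb`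
  -- is read off `hQ`: a map that is not a.e.-measurable pushes `μn n` forward to `0`.
  have hemp : ∀ n, AEMeasurable (fun x => empProb (σ n) x) (μn n : Measure (V n → 𝒳)) :=
    fun n => AEMeasurable.of_map_ne_zero (by rw [← hQ n]; exact IsProbabilityMeasure.ne_zero _)
  have hsub : Tendsto nseq atTop atTop := hmono.tendsto_atTop
  constructor
  · have hnull : (θ : Measure (ProbabilityMeasure (G → 𝒳)))
        {ν | ∃ k : G × ((G → 𝒳) →ᵇ ℝ), 0 < shiftDefect k.1 k.2 ν} = 0 := by
      refine ProbabilityMeasure.measure_exists_pos_eq_zero_of_tendsto hlim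
        (fun k => continuous_shiftDefect k.1 k.2) fun ⟨g, f⟩ δ hδ => ?_
      filter_upwards [hsub.eventually (eventually_shiftDefect_empProb_lt σ (fun h => hσ1 h g)
        (CompactSpace.uniformContinuous_of_continuous f.continuous) hδ)] with i hi
      rw [hQ, Measure.map_apply_of_aemeasurable (hemp _)
        (isOpen_lt continuous_const (continuous_shiftDefect g f)).measurableSet]
      simp [not_lt.2 (hi _).le]
    have hinv_of_null : {ν | ∃ k : G × ((G → 𝒳) →ᵇ ℝ), 0 < shiftDefect k.1 k.2 ν}ᶜ ⊆
        {ν | ∀ g : G, Measure.map (shiftMap G 𝒳 g) (ν : Measure (G → 𝒳)) = ν} :=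
      fun ν hν g => map_shiftMap_eq_of_forall_shiftDefect_eq_zero fun f =>
        (not_lt.1 fun h => hν ⟨(g, f), h⟩).antisymm (abs_nonneg _)
    refine le_antisymm prob_le_one ?_
    calc 1 = _ := ((prob_compl_eq_one_iff₀ (NullMeasurableSet.of_null hnull)).2 hnull).symm
      _ ≤ _ := measure_mono hinv_of_null
  · intro f hf
    set F : (G → 𝒳) →ᵇ ℝ := mkOfCompact ⟨f, hf⟩
    have hθ := ProbabilityMeasure.tendsto_iff_forall_integral_tendsto.1 hlim
      (mkOfCompact ⟨_, ProbabilityMeasure.continuous_integral_boundedContinuousFunction F⟩)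
    have hμ : Tendsto (fun n => ∫ ν, (∫ y, F y ∂(ν : Measure (G → 𝒳)))
        ∂(Q n : Measure (ProbabilityMeasure (G → 𝒳))))
          atTop (𝓝 (∫ y, F y ∂(μ : Measure (G → 𝒳)))) := by
      simp only [hQ, integral_map (hemp _)
        (ProbabilityMeasure.continuous_integral_boundedContinuousFunction F).aestronglyMeasurable,
        integral_integral_empProb]
      exact tendsto_expect_integral_of_tendsto_proportion hlw F
    exact tendsto_nhds_unique hθ (hμ.comp hsub)

/-- **Limits of distributions on measures are supported on invariant measures and
have barycentre `μ`.**  If `μ_n` locally weak* converges to a shift-invariant `μ`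
and `θ` is a subsequential weak* limit of the distributions `P^{σ_n}_* μ_n`, then
`θ` is supported on shift-invariant measures and `∫ ν dθ(ν) = μ`. -/
theorem limit_of_empirical_distributions_invariant_barycentre
    {G 𝒳 : Type*} [Group G] [Countable G]
    [MetricSpace 𝒳] [CompactSpace 𝒳] [SecondCountableTopology 𝒳]
    [MeasurableSpace 𝒳] [BorelSpace 𝒳]
    [MeasurableSpace (ProbabilityMeasure (G → 𝒳))]
    [OpensMeasurableSpace (ProbabilityMeasure (G → 𝒳))]
    (V : ℕ → Type*) [∀ n, Fintype (V n)] [∀ n, Nonempty (V n)]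
    (σ : ∀ n, G → Equiv.Perm (V n))
    (hσ1 : ∀ g h : G,
      Tendsto (fun n => (Nat.card {v : V n // σ n g (σ n h v) = σ n (g * h) v} : ℝ)
          / (Nat.card (V n))) atTop (𝓝 1))
    (hσ2 : ∀ g : G, g ≠ 1 →
      Tendsto (fun n => (Nat.card {v : V n // σ n g v ≠ v} : ℝ)
          / (Nat.card (V n))) atTop (𝓝 1))
    (μ : ProbabilityMeasure (G → 𝒳))
    (hinv : ∀ g : G,
      Measure.map (shiftMap G 𝒳 g) (μ : Measure (G → 𝒳)) = (μ : Measure (G → 𝒳)))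
    (μn : ∀ n, ProbabilityMeasure (V n → 𝒳))
    (hlw : ∀ O ∈ 𝓝 μ,
      Tendsto (fun n => (Nat.card {v : V n // pushName (σ n) v (μn n) ∈ O} : ℝ)
          / (Nat.card (V n))) atTop (𝓝 1))
    (Q : ∀ n, ProbabilityMeasure (ProbabilityMeasure (G → 𝒳)))
    (hQ : ∀ n, (Q n : Measure (ProbabilityMeasure (G → 𝒳)))
        = Measure.map (fun x => empProb (σ n) x) (μn n : Measure (V n → 𝒳)))
    (θ : ProbabilityMeasure (ProbabilityMeasure (G → 𝒳)))
    (nseq : ℕ → ℕ) (hmono : StrictMono nseq)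
    (hlim : Tendsto (fun i => Q (nseq i)) atTop (𝓝 θ)) :
    (θ : Measure (ProbabilityMeasure (G → 𝒳)))
        {ν : ProbabilityMeasure (G → 𝒳) | ∀ g : G,
          Measure.map (shiftMap G 𝒳 g) (ν : Measure (G → 𝒳)) = (ν : Measure (G → 𝒳))} = 1
      ∧ ∀ f : (G → 𝒳) → ℝ, Continuous f →
          (∫ ν, (∫ x, f x ∂(ν : Measure (G → 𝒳)))
              ∂(θ : Measure (ProbabilityMeasure (G → 𝒳))))
            = ∫ x, f x ∂(μ : Measure (G → 𝒳)) :=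
  limit_of_empirical_distributions_invariant_barycentre_general V σ hσ1 μ μn hlw Q hQ θ nseq hmono
    hlim
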